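/- Submodularity of the inverse-Laplacian trace objective on non-empty sets: for a graph Laplacian L of a connected graph (rescaled so it is symmetric PSD with kernel spanned by h) and any sets A, B, C ⊆ {1,...,n} with A non-empty, Tr[(L_{A^c,A^c})⁻¹] − Tr[(L_{(A∪B)^c,(A∪B)^c})⁻¹] − Tr[(L_{(A∪C)^c,(A∪C)^c})⁻¹] + Tr[(L_{(A∪B∪C)^c,(A∪B∪C)^c})⁻¹] ≥ 0. -/

import Mathlib

open Matrix BigOperators

/-- The inclusion of the complement of a finite set of indices. -/
def inclC {n : ℕ} (S : Finset (Fin n)) : {x // x ∉ S} → Fin n := fun i => i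

/-!
Write `G_S` for the inverse of `L_{Sᶜ,Sᶜ}`, extended by zero to the rows and columns in `S`.
Grounding one more index `k` is a rank-one (Schur complement) update
`G_{S ∪ {k}} = G_S - G_S(·,k) G_S(k,·) / G_S(k,k)`, and since `L_{Sᶜ,Sᶜ}` is a positive definite
Z-matrix, all entries of `G_S` are nonnegative. Comparing the update at `S` and at `S ∪ {c}` with
these signs shows that the decrease `G_S - G_{S ∪ {k}}` is entrywise antitone in `S`; by
induction over `B` and `C` this gives entrywise submodularity of `S ↦ G_S`, and the theorem is its
trace.
-/

open Finset

theorem Fintype.sum_subtype_notMem_eq_sum {ι M : Type*} [Fintype ι] [DecidableEq ι]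
    [AddCommMonoid M] (S : Finset ι) (f : ι → M) (hf : ∀ i ∈ S, f i = 0) :
    ∑ i : {i // i ∉ S}, f i = ∑ i, f i := by
  rw [← sum_subtype Sᶜ (fun _ => mem_compl) f]
  exact Finset.sum_subset (subset_univ _) fun i _ hi => hf i (by simpa using hi)

/-- The gain `xi xj / a` of grounding `k`, before and after grounding `c`, in the entries of
`G = G_S`: `a = G(k,k)`, `b = G(c,c)`, `m = G(k,c)`, `xi = G(i,k)`, `yi = G(i,c)`, `xj = G(k,j)`,
`yj = G(c,j)`. -/
theorem schur_gain_le {a b m xi yi xj yj : ℝ} (ha : 0 < a) (hb : 0 < b)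
    (hd : 0 < a - m * m / b) (hm : 0 ≤ m) (hxi : 0 ≤ xi) (hyi : 0 ≤ yi)
    (hP : 0 ≤ xj - m * yj / b) (hQ : 0 ≤ yj - m * xj / a) :
    (xi - yi * m / b) * (xj - m * yj / b) / (a - m * m / b) ≤ xi * xj / a := by
  have hP' : 0 ≤ b * xj - m * yj := by
    have := mul_nonneg hb.le hP; rwa [mul_sub, mul_div_cancel₀ _ hb.ne'] at this
  have hQ' : 0 ≤ a * yj - m * xj := by
    have := mul_nonneg ha.le hQ; rwa [mul_sub, mul_div_cancel₀ _ ha.ne'] at this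
  rw [div_le_div_iff₀ hd ha]
  field_simp
  -- cleared of denominators, the difference is `m (b xi (a yj - m xj) + a yi (b xj - m yj))`
  nlinarith [mul_nonneg (mul_nonneg (mul_nonneg hm hb.le) hxi) hQ',
    mul_nonneg (mul_nonneg (mul_nonneg hm ha.le) hyi) hP']

namespace Matrix

theorem PosDef.inv_apply_nonneg_of_offDiag_nonpos {m : Type*} [Fintype m] [DecidableEq m]
    {M : Matrix m m ℝ} (hM : M.PosDef) (hZ : ∀ i j, i ≠ j → M i j ≤ 0) (i j : m) :
    0 ≤ M⁻¹ i j := by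
  -- `x` is the `j`-th column of `M⁻¹`; testing `M x = eⱼ` against `x⁻` shows `x⁻ᵀ M x⁻ ≤ 0`
  set x := M⁻¹ *ᵥ Pi.single j 1
  have hMx : x⁻ ⬝ᵥ M *ᵥ x = x⁻ j := by
    rw [mulVec_mulVec, mul_nonsing_inv _ ((isUnit_iff_isUnit_det M).1 hM.isUnit), one_mulVec,
      dotProduct_single_one]
  have hcross : x⁻ ⬝ᵥ M *ᵥ x⁺ ≤ 0 := by
    rw [dot_mulVec_eq_sum_sum]
    refine sum_nonpos fun b _ => sum_nonpos fun a _ => ?_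
    obtain rfl | hab := eq_or_ne a b
    · rcases le_total (x a) 0 with h | h <;> simp [posPart_of_nonpos, negPart_of_nonneg, h]
    · exact mul_nonpos_of_nonpos_of_nonneg
        (mul_nonpos_of_nonneg_of_nonpos (negPart_nonneg _) (hZ a b hab)) (posPart_nonneg _)
  have hneg : x⁻ = 0 := by
    by_contra hne
    have hpos := hM.dotProduct_mulVec_pos hne
    have hsplit : x⁻ ⬝ᵥ M *ᵥ x⁻ = x⁻ ⬝ᵥ M *ᵥ x⁺ - x⁻ ⬝ᵥ M *ᵥ x := by
      have hx : x⁺ - x = x⁻ := by nth_rw 2 [← posPart_sub_negPart x]; rw [sub_sub_cancel]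
      rw [← dotProduct_sub, ← mulVec_sub, hx]
    have hj : 0 ≤ x⁻ j := negPart_nonneg x j
    rw [star_trivial] at hpos
    linarith
  have hxi : x i = M⁻¹ i j := by simp [x]
  rw [← hxi, ← posPart_sub_negPart (x i)]
  simp [show (x i)⁻ = 0 from congrFun hneg i]

variable {ι : Type*}

def grounded (L : Matrix ι ι ℝ) (S : Finset ι) : Matrix {i // i ∉ S} {i // i ∉ S} ℝ :=
  L.submatrix (↑) (↑)

@[simp]
theorem grounded_apply (L : Matrix ι ι ℝ) (S : Finset ι) (i j : {i // i ∉ S}) :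
    L.grounded S i j = L i j :=
  rfl

theorem PosDef.grounded_of_subset {L : Matrix ι ι ℝ} {S T : Finset ι}
    (hS : (L.grounded S).PosDef) (hST : S ⊆ T) : (L.grounded T).PosDef :=
  hS.submatrix (e := fun i : {i // i ∉ T} => (⟨i, fun h => i.2 (hST h)⟩ : {i // i ∉ S}))
    fun _ _ h => Subtype.ext (congrArg Subtype.val h :)

variable [Fintype ι] [DecidableEq ι]

noncomputable def green (L : Matrix ι ι ℝ) (S : Finset ι) : Matrix ι ι ℝ :=
  of fun i j =>
    if hi : i ∈ S then 0 else if hj : j ∈ S then 0 else (L.grounded S)⁻¹ ⟨i, hi⟩ ⟨j, hj⟩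

variable {L : Matrix ι ι ℝ} {S : Finset ι} {i j k : ι}

theorem PosSemidef.posDef_grounded (hL : L.PosSemidef) {h : ι → ℝ} (hh : ∀ i, h i ≠ 0)
    (hker : ∀ x, L *ᵥ x = 0 → ∃ c : ℝ, x = c • h) (hS : S.Nonempty) :
    (L.grounded S).PosDef := by
  refine (hL.submatrix _).posDef_iff_isUnit.2 (mulVec_injective_iff_isUnit.1 ?_)
  refine (injective_iff_map_eq_zero (L.grounded S).mulVecLin).2 fun x hx => ?_
  set xt : ι → ℝ := fun i => if hi : i ∈ S then 0 else x ⟨i, hi⟩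
  have hxt : ∀ i ∈ S, xt i = 0 := fun i hi => dif_pos hi
  have hLxt : ∀ i : {i // i ∉ S}, (L *ᵥ xt) i = (L.grounded S *ᵥ x) i := fun i => by
    simp only [mulVec, dotProduct]
    rw [← Fintype.sum_subtype_notMem_eq_sum S _ fun l hl => by simp [hxt l hl]]
    exact sum_congr rfl fun l _ => by simp [xt, l.2]
  have hq : star xt ⬝ᵥ L *ᵥ xt = 0 := by
    refine Fintype.sum_eq_zero _ fun i => ?_
    by_cases hi : i ∈ S
    · simp [hxt i hi]
    · simp [hLxt ⟨i, hi⟩, show L.grounded S *ᵥ x = 0 from hx]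
  obtain ⟨c, hc⟩ := hker xt ((hL.dotProduct_mulVec_zero_iff xt).1 hq)
  obtain ⟨s, hs⟩ := hS
  have hc0 : c = 0 := by
    simpa [hh s] using (hxt s hs).symm.trans (congrFun hc s)
  ext i
  simpa [xt, hc0, i.2] using congrFun hc i

theorem green_of_mem_left (hi : i ∈ S) (j : ι) : green L S i j = 0 := by
  simp [green, hi]

theorem green_of_mem_right (hj : j ∈ S) (i : ι) : green L S i j = 0 := by
  by_cases hi : i ∈ S <;> simp [green, hi, hj]

theorem green_of_notMem (hi : i ∉ S) (hj : j ∉ S) :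
    green L S i j = (L.grounded S)⁻¹ ⟨i, hi⟩ ⟨j, hj⟩ := by
  simp [green, hi, hj]

theorem trace_inv_grounded (L : Matrix ι ι ℝ) (S : Finset ι) :
    (L.grounded S)⁻¹.trace = (green L S).trace := by
  calc (L.grounded S)⁻¹.trace = ∑ i : {i // i ∉ S}, green L S i i :=
        sum_congr rfl fun i _ => (green_of_notMem i.2 i.2).symm
    _ = (green L S).trace :=
        Fintype.sum_subtype_notMem_eq_sum S _ fun i hi => green_of_mem_left hi i

theorem mul_apply_eq_grounded_mul {G : Matrix ι ι ℝ} (hG : ∀ l ∈ S, ∀ j, G l j = 0)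
    (i j : {i // i ∉ S}) : (L * G) i j = (L.grounded S * G.grounded S) i j := by
  rw [mul_apply, mul_apply, ← Fintype.sum_subtype_notMem_eq_sum S _ fun l hl => by simp [hG l hl]]
  rfl

theorem green_eq_of_mul_eq {G : Matrix ι ι ℝ} (hrow : ∀ i ∈ S, ∀ j, G i j = 0)
    (hcol : ∀ j ∈ S, ∀ i, G i j = 0)
    (hmul : ∀ i ∉ S, ∀ j ∉ S, (L * G) i j = (1 : Matrix ι ι ℝ) i j) : green L S = G := by
  have hinv : (L.grounded S)⁻¹ = G.grounded S := by
    refine inv_eq_right_inv (ext fun a b => ?_)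
    rw [← mul_apply_eq_grounded_mul hrow, hmul a a.2 b b.2]
    simp only [one_apply, Subtype.val_inj]
  ext i j
  by_cases hi : i ∈ S
  · rw [green_of_mem_left hi, hrow i hi]
  by_cases hj : j ∈ S
  · rw [green_of_mem_right hj, hcol j hj]
  rw [green_of_notMem hi hj, hinv, grounded_apply]

variable (hS : (L.grounded S).PosDef)
include hS

theorem green_symm (i j : ι) : green L S j i = green L S i j := by
  by_cases hi : i ∈ S
  · rw [green_of_mem_left hi, green_of_mem_right hi]
  by_cases hj : j ∈ S
  · rw [green_of_mem_left hj, green_of_mem_right hj]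
  rw [green_of_notMem hi hj, green_of_notMem hj hi]
  simpa using hS.inv.isHermitian.apply ⟨i, hi⟩ ⟨j, hj⟩

theorem green_diag_pos (hk : k ∉ S) : 0 < green L S k k := by
  rw [green_of_notMem hk hk]
  exact hS.inv.diag_pos

theorem green_nonneg (hZ : ∀ i j, i ≠ j → L i j ≤ 0) (i j : ι) : 0 ≤ green L S i j := by
  by_cases hi : i ∈ S
  · rw [green_of_mem_left hi]
  by_cases hj : j ∈ S
  · rw [green_of_mem_right hj]
  rw [green_of_notMem hi hj]
  exact hS.inv_apply_nonneg_of_offDiag_nonpos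
    (fun a b hab => hZ a b (Subtype.val_injective.ne hab)) _ _

theorem mul_green_apply (hi : i ∉ S) (hj : j ∉ S) :
    (L * green L S) i j = (1 : Matrix ι ι ℝ) i j := by
  have hsub : (green L S).grounded S = (L.grounded S)⁻¹ :=
    ext fun a b => green_of_notMem a.2 b.2
  rw [mul_apply_eq_grounded_mul (fun l hl j => green_of_mem_left hl j) ⟨i, hi⟩ ⟨j, hj⟩,
    hsub, mul_nonsing_inv _ ((isUnit_iff_isUnit_det _).1 hS.isUnit)]
  simp only [one_apply, Subtype.mk.injEq]

theorem green_insert (hk : k ∉ S) (i j : ι) :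
    green L (insert k S) i j = green L S i j - green L S i k * green L S k j / green L S k k := by
  have hkk := (green_diag_pos hS hk).ne'
  set g := green L S with hg
  suffices green L (insert k S) = of fun i j => g i j - g i k * g k j / g k k from
    congrFun (congrFun this i) j
  refine green_eq_of_mul_eq ?_ ?_ fun i hi j hj => ?_
  · intro i hi j
    rcases mem_insert.1 hi with rfl | hi
    · simp [mul_div_cancel_left₀ _ hkk]
    · simp [hg, green_of_mem_left hi]
  · intro j hj i
    rcases mem_insert.1 hj with rfl | hj
    · simp [mul_div_cancel_right₀ _ hkk]
    · simp [hg, green_of_mem_right hj]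
  have hiS : i ∉ S := fun h => hi (mem_insert_of_mem h)
  have hik : i ≠ k := fun h => hi (h ▸ mem_insert_self k S)
  have hexp : (L * of fun i j => g i j - g i k * g k j / g k k) i j
      = (L * g) i j - (L * g) i k * (g k j / g k k) := by
    simp only [mul_apply, of_apply, mul_sub, sum_sub_distrib, sum_mul]
    congr 1
    exact sum_congr rfl fun l _ => by ring
  rw [hexp, mul_green_apply hS hiS fun h => hj (mem_insert_of_mem h), mul_green_apply hS hiS hk,
    one_apply_ne hik, zero_mul, sub_zero]

variable (hZ : ∀ i j, i ≠ j → L i j ≤ 0)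
include hZ

theorem green_sub_green_insert_insert_le (k c i j : ι) :
    green L (insert c S) i j - green L (insert k (insert c S)) i j
      ≤ green L S i j - green L (insert k S) i j := by
  by_cases hk : k ∈ S
  · rw [insert_eq_of_mem hk, insert_eq_of_mem (mem_insert_of_mem hk), sub_self, sub_self]
  by_cases hc : c ∈ S
  · rw [insert_eq_of_mem hc]
  have hSc := hS.grounded_of_subset (subset_insert c S)
  have hSk := hS.grounded_of_subset (subset_insert k S)
  have hG := green_nonneg hS hZ
  rw [green_insert hS hk, sub_sub_cancel]
  obtain rfl | hkc := eq_or_ne k c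
  · rw [insert_idem, sub_self]
    exact div_nonneg (mul_nonneg (hG i k) (hG k j)) (green_diag_pos hS hk).le
  have hk' : k ∉ insert c S := by simp [hk, hkc]
  have hd := green_diag_pos hSc hk'
  have hP := green_nonneg hSc hZ k j
  have hQ := green_nonneg hSk hZ c j
  rw [green_insert hSc hk', sub_sub_cancel]
  simp only [green_insert hS hc] at hd hP ⊢
  rw [green_insert hS hk] at hQ
  rw [green_symm hS k c] at hd hQ ⊢
  exact schur_gain_le (green_diag_pos hS hk) (green_diag_pos hS hc) hd (hG k c)
    (hG i k) (hG i c) hP hQ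

theorem green_sub_green_insert_union_le (C : Finset ι) (k i j : ι) :
    green L (S ∪ C) i j - green L (insert k (S ∪ C)) i j
      ≤ green L S i j - green L (insert k S) i j := by
  induction C using Finset.induction_on with
  | empty => rw [union_empty]
  | insert c C _ ih =>
    rw [union_insert]
    exact (green_sub_green_insert_insert_le
      (hS.grounded_of_subset subset_union_left) hZ k c i j).trans ih

theorem green_submodular (B C : Finset ι) (i j : ι) :
    0 ≤ green L S i j - green L (S ∪ B) i j - green L (S ∪ C) i j + green L (S ∪ B ∪ C) i j := by
  induction B using Finset.induction_on with
  | empty => simp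
  | insert k B _ ih =>
    have hstep := green_sub_green_insert_union_le
      (hS.grounded_of_subset (subset_union_left (s₂ := B))) hZ C k i j
    rw [union_insert, insert_union]
    linarith

end Matrix

theorem stmt_19_general (n : ℕ) (L : Matrix (Fin n) (Fin n) ℝ) (h : Fin n → ℝ)
    (hL : L.PosSemidef) (hoff : ∀ i j, i ≠ j → L i j ≤ 0)
    (hpos : ∀ i, 0 < h i)
    (hker : ∀ x : Fin n → ℝ, L *ᵥ x = 0 → ∃ c : ℝ, x = c • h)
    (A B C : Finset (Fin n)) (hA : A.Nonempty) :
    0 ≤ ((L.submatrix (inclC A) (inclC A))⁻¹).trace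
        - ((L.submatrix (inclC (A ∪ B)) (inclC (A ∪ B)))⁻¹).trace
        - ((L.submatrix (inclC (A ∪ C)) (inclC (A ∪ C)))⁻¹).trace
        + ((L.submatrix (inclC (A ∪ B ∪ C)) (inclC (A ∪ B ∪ C)))⁻¹).trace := by
  have hPD : (L.grounded A).PosDef := hL.posDef_grounded (fun i => (hpos i).ne') hker hA
  change 0 ≤ (L.grounded A)⁻¹.trace - (L.grounded (A ∪ B))⁻¹.trace
    - (L.grounded (A ∪ C))⁻¹.trace + (L.grounded (A ∪ B ∪ C))⁻¹.trace
  simp only [trace_inv_grounded, ← trace_sub, ← trace_add]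
  exact sum_nonneg fun i _ => green_submodular hPD hoff B C i i

/-- Submodularity of the inverse-Laplacian trace objective on non-empty sets: for a
rescaled graph Laplacian `L` of a connected graph (symmetric PSD, nonpositive
off-diagonal entries, kernel spanned by the entrywise positive vector `h`) and any
sets `A, B, C` of indices with `A` non-empty,
`Tr[(L_{Aᶜ,Aᶜ})⁻¹] − Tr[(L_{(A∪B)ᶜ,(A∪B)ᶜ})⁻¹] − Tr[(L_{(A∪C)ᶜ,(A∪C)ᶜ})⁻¹]
  + Tr[(L_{(A∪B∪C)ᶜ,(A∪B∪C)ᶜ})⁻¹] ≥ 0`. -/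
theorem stmt_19 (n : ℕ) (L : Matrix (Fin n) (Fin n) ℝ) (h : Fin n → ℝ)
    (hL : L.PosSemidef) (hoff : ∀ i j, i ≠ j → L i j ≤ 0)
    (hpos : ∀ i, 0 < h i) (hLh : L *ᵥ h = 0)
    (hker : ∀ x : Fin n → ℝ, L *ᵥ x = 0 → ∃ c : ℝ, x = c • h)
    (A B C : Finset (Fin n)) (hA : A.Nonempty) :
    0 ≤ ((L.submatrix (inclC A) (inclC A))⁻¹).trace
        - ((L.submatrix (inclC (A ∪ B)) (inclC (A ∪ B)))⁻¹).trace
        - ((L.submatrix (inclC (A ∪ C)) (inclC (A ∪ C)))⁻¹).trace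
        + ((L.submatrix (inclC (A ∪ B ∪ C)) (inclC (A ∪ B ∪ C)))⁻¹).trace :=
  stmt_19_general n L h hL hoff hpos hker A B C hA
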